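/- Define v : ℝ² × (−∞,0) → ℝ by v(x,t) = (1 + 2·cosh(−t)·‖x‖² + ‖x‖⁴)/(8·sinh(−t)). Then v is smooth, positive, and satisfies ∂v/∂t = v·Δv − ‖∇v‖² at every point of ℝ² × (−∞,0), where ∇v and Δv denote the gradient and Laplacian of v(·,t) with respect to the Euclidean metric on ℝ². -/

import Mathlib

/- We identify `ℝ²` with `ℂ`. Partial derivatives, the Laplacian, and the squared
norm of the gradient with respect to the Euclidean metric on `ℝ² ≅ ℂ`. -/

/-- Partial derivative in the first Euclidean coordinate. -/
noncomputable def pdxR (f : ℂ → ℝ) (z : ℂ) : ℝ :=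
  deriv (fun s : ℝ => f (z + (s : ℂ))) 0

/-- Partial derivative in the second Euclidean coordinate. -/
noncomputable def pdyR (f : ℂ → ℝ) (z : ℂ) : ℝ :=
  deriv (fun s : ℝ => f (z + (s : ℂ) * Complex.I)) 0

/-- Euclidean Laplacian on `ℝ² ≅ ℂ`. -/
noncomputable def lapR (f : ℂ → ℝ) (z : ℂ) : ℝ :=
  pdxR (pdxR f) z + pdyR (pdyR f) z

/-- Squared Euclidean norm of the gradient on `ℝ² ≅ ℂ`. -/
noncomputable def gradSq (f : ℂ → ℝ) (z : ℂ) : ℝ :=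
  (pdxR f z) ^ 2 + (pdyR f z) ^ 2

/-- The conformal factor of the King–Rosenau solution:
`v(x,t) = (1 + 2 cosh(−t) ‖x‖² + ‖x‖⁴)/(8 sinh(−t))`, for `t < 0`. -/
noncomputable def krV : ℂ × ℝ → ℝ :=
  fun p => (1 + 2 * Real.cosh (-p.2) * ‖p.1‖ ^ 2 + ‖p.1‖ ^ 4) / (8 * Real.sinh (-p.2))

/-!
For each `t`, `v(·, t)` is radial: `v(x, t) = φ_t(‖x‖²)` with
`φ_t(s) = (1 + 2 cosh(-t) s + s²)/(8 sinh(-t))` (`krProfile t s` below).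
For a radial function `f = g(‖x‖²)` one has `Δf = 4 g' + 4 ‖x‖² g''` and
`‖∇f‖² = 4 ‖x‖² g'²`, so the Ricci flow equation becomes an identity between rational
functions of `s = ‖x‖²`, `cosh(-t)` and `sinh(-t)`; after clearing denominators it is
a multiple of `cosh² - sinh² - 1 = 0`.
-/

open Real

lemma hasDerivAt_norm_add_ofReal_sq (w : ℂ) :
    HasDerivAt (fun s : ℝ => ‖w + s‖ ^ 2) (2 * w.re) 0 := by
  have h : (fun s : ℝ => ‖w + s‖ ^ 2) = fun s => (w.re + s) ^ 2 + w.im ^ 2 := by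
    ext s
    simp only [Complex.sq_norm, Complex.normSq_apply, Complex.add_re, Complex.ofReal_re,
      Complex.add_im, Complex.ofReal_im, add_zero]
    ring
  rw [h]
  simpa using (((hasDerivAt_id (0 : ℝ)).const_add w.re).pow 2).add_const (w.im ^ 2)

lemma hasDerivAt_norm_add_ofReal_mul_I_sq (w : ℂ) :
    HasDerivAt (fun s : ℝ => ‖w + s * Complex.I‖ ^ 2) (2 * w.im) 0 := by
  have h : (fun s : ℝ => ‖w + s * Complex.I‖ ^ 2) = fun s => w.re ^ 2 + (w.im + s) ^ 2 := by
    ext s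
    simp only [Complex.sq_norm, Complex.normSq_apply, Complex.add_re, Complex.mul_re,
      Complex.ofReal_re, Complex.I_re, mul_zero, Complex.ofReal_im, Complex.I_im, mul_one,
      sub_self, add_zero, Complex.add_im, Complex.mul_im]
    ring
  rw [h]
  simpa using (((hasDerivAt_id (0 : ℝ)).const_add w.im).pow 2).const_add (w.re ^ 2)

section Radial

variable {g g' g'' : ℝ → ℝ}

lemma pdxR_comp_norm_sq (hg : ∀ x, HasDerivAt g (g' x) x) (w : ℂ) :
    pdxR (fun z => g (‖z‖ ^ 2)) w = 2 * w.re * g' (‖w‖ ^ 2) := by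
  have h := (hg _).comp (0 : ℝ) (hasDerivAt_norm_add_ofReal_sq w)
  simp only [Function.comp_def] at h
  rw [pdxR]
  simpa [mul_comm] using h.deriv

lemma pdyR_comp_norm_sq (hg : ∀ x, HasDerivAt g (g' x) x) (w : ℂ) :
    pdyR (fun z => g (‖z‖ ^ 2)) w = 2 * w.im * g' (‖w‖ ^ 2) := by
  have h := (hg _).comp (0 : ℝ) (hasDerivAt_norm_add_ofReal_mul_I_sq w)
  simp only [Function.comp_def] at h
  rw [pdyR]
  simpa [mul_comm] using h.deriv

lemma pdxR_re_mul_comp_norm_sq (c : ℝ) (hg : ∀ x, HasDerivAt g (g' x) x) (w : ℂ) :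
    pdxR (fun z => c * z.re * g (‖z‖ ^ 2)) w
      = c * (g (‖w‖ ^ 2) + 2 * w.re ^ 2 * g' (‖w‖ ^ 2)) := by
  have hre : HasDerivAt (fun s : ℝ => c * (w + s).re) c 0 := by
    simpa using ((hasDerivAt_id (0 : ℝ)).const_add w.re).const_mul c
  have h := hre.fun_mul ((hg _).comp (0 : ℝ) (hasDerivAt_norm_add_ofReal_sq w))
  rw [pdxR]
  simp only [Function.comp_def] at h
  rw [h.deriv]
  simp only [Complex.ofReal_zero, add_zero]
  ring

lemma pdyR_im_mul_comp_norm_sq (c : ℝ) (hg : ∀ x, HasDerivAt g (g' x) x) (w : ℂ) :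
    pdyR (fun z => c * z.im * g (‖z‖ ^ 2)) w
      = c * (g (‖w‖ ^ 2) + 2 * w.im ^ 2 * g' (‖w‖ ^ 2)) := by
  have him : HasDerivAt (fun s : ℝ => c * (w + s * Complex.I).im) c 0 := by
    simpa using ((hasDerivAt_id (0 : ℝ)).const_add w.im).const_mul c
  have h := him.fun_mul ((hg _).comp (0 : ℝ) (hasDerivAt_norm_add_ofReal_mul_I_sq w))
  rw [pdyR]
  simp only [Function.comp_def] at h
  rw [h.deriv]
  simp only [Complex.ofReal_zero, zero_mul, add_zero]
  ring

lemma lapR_comp_norm_sq (hg : ∀ x, HasDerivAt g (g' x) x) (hg' : ∀ x, HasDerivAt g' (g'' x) x)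
    (w : ℂ) :
    lapR (fun z => g (‖z‖ ^ 2)) w = 4 * g' (‖w‖ ^ 2) + 4 * ‖w‖ ^ 2 * g'' (‖w‖ ^ 2) := by
  rw [lapR, funext (pdxR_comp_norm_sq hg), funext (pdyR_comp_norm_sq hg),
    pdxR_re_mul_comp_norm_sq 2 hg', pdyR_im_mul_comp_norm_sq 2 hg', Complex.sq_norm,
    Complex.normSq_apply]
  ring

lemma gradSq_comp_norm_sq (hg : ∀ x, HasDerivAt g (g' x) x) (w : ℂ) :
    gradSq (fun z => g (‖z‖ ^ 2)) w = 4 * ‖w‖ ^ 2 * g' (‖w‖ ^ 2) ^ 2 := by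
  rw [gradSq, pdxR_comp_norm_sq hg, pdyR_comp_norm_sq hg, Complex.sq_norm, Complex.normSq_apply]
  ring

end Radial

noncomputable def krProfile (t s : ℝ) : ℝ :=
  (1 + 2 * cosh (-t) * s + s ^ 2) / (8 * sinh (-t))

lemma krV_eq_krProfile (p : ℂ × ℝ) : krV p = krProfile p.2 (‖p.1‖ ^ 2) := by
  rw [krV, krProfile, ← pow_mul]

lemma contDiffOn_krV : ContDiffOn ℝ (⊤ : ℕ∞) krV {p : ℂ × ℝ | p.2 < 0} := by
  have hN : ContDiff ℝ (⊤ : ℕ∞) fun p : ℂ × ℝ => ‖p.1‖ ^ 2 :=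
    (contDiff_norm_sq ℝ).comp contDiff_fst
  have hc : ContDiff ℝ (⊤ : ℕ∞) fun p : ℂ × ℝ => cosh (-p.2) :=
    contDiff_cosh.comp contDiff_snd.neg
  have hs : ContDiff ℝ (⊤ : ℕ∞) fun p : ℂ × ℝ => sinh (-p.2) :=
    contDiff_sinh.comp contDiff_snd.neg
  simp only [funext krV_eq_krProfile, krProfile]
  refine ContDiffOn.div (by fun_prop) (by fun_prop) fun p hp => ?_
  have : 0 < sinh (-p.2) := sinh_pos_iff.mpr (neg_pos.mpr hp)
  positivity

lemma krV_pos {p : ℂ × ℝ} (hp : p.2 < 0) : 0 < krV p := by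
  have : 0 < sinh (-p.2) := sinh_pos_iff.mpr (neg_pos.mpr hp)
  rw [krV]
  positivity

lemma hasDerivAt_krProfile (t s : ℝ) :
    HasDerivAt (krProfile t) ((2 * cosh (-t) + 2 * s) / (8 * sinh (-t))) s := by
  have h := ((((hasDerivAt_id' s).const_mul (2 * cosh (-t))).const_add 1).fun_add
    (hasDerivAt_pow 2 s)).div_const (8 * sinh (-t))
  exact h.congr_deriv (by norm_num)

lemma hasDerivAt_krProfile_deriv (t s : ℝ) :
    HasDerivAt (fun s => (2 * cosh (-t) + 2 * s) / (8 * sinh (-t))) (2 / (8 * sinh (-t))) s := by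
  simpa using
    (((hasDerivAt_id' s).const_mul 2).const_add (2 * cosh (-t))).div_const (8 * sinh (-t))

lemma hasDerivAt_krProfile_time {t : ℝ} (ht : t ≠ 0) (s : ℝ) :
    HasDerivAt (fun t => krProfile t s) (cosh (-t) / sinh (-t) * krProfile t s - s / 4) t := by
  have hS : sinh (-t) ≠ 0 := by simpa using ht
  have hnum := (((hasDerivAt_neg t).cosh.const_mul 2).mul_const s).const_add 1 |>.add_const (s ^ 2)
  have hden := (hasDerivAt_neg t).sinh.const_mul 8
  refine (hnum.fun_div hden (by positivity)).congr_deriv ?_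
  rw [krProfile]
  field_simp
  ring

lemma krProfile_ricci_flow {t : ℝ} (ht : t ≠ 0) (s : ℝ) :
    cosh (-t) / sinh (-t) * krProfile t s - s / 4
      = krProfile t s * (4 * ((2 * cosh (-t) + 2 * s) / (8 * sinh (-t)))
          + 4 * s * (2 / (8 * sinh (-t))))
        - 4 * s * ((2 * cosh (-t) + 2 * s) / (8 * sinh (-t))) ^ 2 := by
  have hS : sinh (-t) ≠ 0 := by simpa using ht
  rw [krProfile]
  field_simp
  linear_combination (64 * s) * cosh_sq_sub_sinh_sq (-t)

/-- The King–Rosenau conformal factor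
`v(x,t) = (1 + 2 cosh(−t) ‖x‖² + ‖x‖⁴)/(8 sinh(−t))` is smooth and positive on
`ℝ² × (−∞,0)` and satisfies the two-dimensional Ricci flow equation
`∂v/∂t = v·Δv − ‖∇v‖²` there, where `∇` and `Δ` are taken with respect to the
Euclidean metric on `ℝ²` in the `x` variable. -/
theorem king_rosenau_solves_ricci_flow :
    ContDiffOn ℝ (⊤ : ℕ∞) krV {p : ℂ × ℝ | p.2 < 0} ∧
    ∀ p : ℂ × ℝ, p.2 < 0 → 0 < krV p ∧
      deriv (fun s : ℝ => krV (p.1, s)) p.2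
        = krV p * lapR (fun z => krV (z, p.2)) p.1
          - gradSq (fun z => krV (z, p.2)) p.1 := by
  refine ⟨contDiffOn_krV, fun p hp => ⟨krV_pos hp, ?_⟩⟩
  simp only [krV_eq_krProfile]
  rw [(hasDerivAt_krProfile_time hp.ne _).deriv,
    lapR_comp_norm_sq (hasDerivAt_krProfile _) (hasDerivAt_krProfile_deriv _),
    gradSq_comp_norm_sq (hasDerivAt_krProfile _)]
  exact krProfile_ricci_flow hp.ne _
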